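/- Let X be a real n×p matrix and let a, k be integers with 1 ≤ a ≤ k ≤ p. Then the supremum of tr(Wᵀ·diag(s)·XᵀX·diag(s)·W) over all pairs (s, W) with s ∈ {0,1}^p, Σ_i s_i ≤ k, W ∈ ℝ^{p×a}, Wᵀ·diag(s)·W = I_a and WᵀW = I_a, equals the supremum of the same objective over all pairs (s, W) with s ∈ {0,1}^p, Σ_i s_i ≤ k and WᵀW = I_a (i.e., the constraint Wᵀ·diag(s)·W = I_a can be dropped without changing the optimal value). -/

import Mathlib

/-!
The objective equals `frobSq (X * diagonal s * W)`. Given a pair `(s, W)` with only `Wᵀ W = 1`,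
enlarge the support of `s` to a set `S` with `a ≤ #S ≤ k`. An orthogonal `Q` diagonalising the Gram
matrix of `diagonal s * W` makes the columns of `diagonal s * W * Q` orthogonal, of norm at most 1,
and supported on `S`; normalising the nonzero ones and completing them inside `ℝ^S` (possible since
`#S ≥ a`) gives `diagonal s * W * Q = U * diagonal c` with `U` orthonormal on `S` and `|c j| ≤ 1`.
Hence the objective does not decrease when `(s, W)` is replaced by `(indicator of S, U)`, which
satisfies both constraints.
-/

open Matrix BigOperators

noncomputable section

/-- Squared Frobenius norm of a real matrix. -/
def frobSq {n m : ℕ} (M : Matrix (Fin n) (Fin m) ℝ) : ℝ := ∑ i, ∑ j, (M i j) ^ 2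

/-- A vector is binary if each entry is 0 or 1. -/
def IsBinary {p : ℕ} (s : Fin p → ℝ) : Prop := ∀ i, s i = 0 ∨ s i = 1

/-- Stiefel set: matrices with orthonormal columns. -/
def Stiefel (n a : ℕ) : Set (Matrix (Fin n) (Fin a) ℝ) := {U | Uᵀ * U = 1}

/-- Squared Euclidean norm of column `i` of `X`. -/
def colNormSq {n p : ℕ} (X : Matrix (Fin n) (Fin p) ℝ) (i : Fin p) : ℝ :=
  ∑ r, (X r i) ^ 2

/-- μ(s) = Σ_i s_i ‖X_i‖². -/
def muF {n p : ℕ} (X : Matrix (Fin n) (Fin p) ℝ) (s : Fin p → ℝ) : ℝ :=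
  ∑ i, s i * colNormSq X i

/-- η(s) = inf over Stiefel matrices U of ‖X diag(s) − U Uᵀ X diag(s)‖_F². -/
def etaF {n p : ℕ} (X : Matrix (Fin n) (Fin p) ℝ) (a : ℕ) (s : Fin p → ℝ) : ℝ :=
  sInf ((fun U : Matrix (Fin n) (Fin a) ℝ =>
    frobSq (X * diagonal s - U * Uᵀ * (X * diagonal s))) '' Stiefel n a)

/-- π(s) = sup over Stiefel matrices U of ‖U Uᵀ X diag(s)‖_F². -/
def piF {n p : ℕ} (X : Matrix (Fin n) (Fin p) ℝ) (a : ℕ) (s : Fin p → ℝ) : ℝ :=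
  sSup ((fun U : Matrix (Fin n) (Fin a) ℝ =>
    frobSq (U * Uᵀ * (X * diagonal s))) '' Stiefel n a)

/-- Feasibility for Problem (2): binary with at most k ones. -/
def Feas {p : ℕ} (k : ℕ) (s : Fin p → ℝ) : Prop :=
  IsBinary s ∧ ∑ i, s i ≤ (k : ℝ)

/-- Optimality for Problem (2): feasible and maximizing π. -/
def Opt2 {n p : ℕ} (X : Matrix (Fin n) (Fin p) ℝ) (a k : ℕ) (s : Fin p → ℝ) : Prop :=
  Feas k s ∧ ∀ s' : Fin p → ℝ, Feas k s' → piF X a s' ≤ piF X a s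

/-- Feasibility for Problem (7) with parameter η. -/
def Feas7 {n p : ℕ} (X : Matrix (Fin n) (Fin p) ℝ) (a k : ℕ) (η : ℝ) (s : Fin p → ℝ) : Prop :=
  Feas k s ∧ etaF X a s ≤ η

/-- Optimality for Problem (7): feasible and maximizing μ. -/
def Opt7 {n p : ℕ} (X : Matrix (Fin n) (Fin p) ℝ) (a k : ℕ) (η : ℝ) (s : Fin p → ℝ) : Prop :=
  Feas7 X a k η s ∧ ∀ s' : Fin p → ℝ, Feas7 X a k η s' → muF X s' ≤ muF X s


section Frobenius

variable {n m : ℕ}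

lemma frobSq_eq_trace (M : Matrix (Fin n) (Fin m) ℝ) : frobSq M = trace (Mᵀ * M) := by
  rw [frobSq, trace, Finset.sum_comm]
  simp [mul_apply, sq]

lemma frobSq_mul_of_mul_transpose_eq_one (M : Matrix (Fin n) (Fin m) ℝ)
    {Q : Matrix (Fin m) (Fin m) ℝ} (hQ : Q * Qᵀ = 1) : frobSq (M * Q) = frobSq M := by
  rw [frobSq_eq_trace, frobSq_eq_trace, transpose_mul, Matrix.mul_assoc, trace_mul_comm,
    Matrix.mul_assoc, Matrix.mul_assoc, hQ, Matrix.mul_one]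

lemma frobSq_mul_diagonal_le (M : Matrix (Fin n) (Fin m) ℝ) {c : Fin m → ℝ}
    (hc : ∀ j, c j ^ 2 ≤ 1) : frobSq (M * diagonal c) ≤ frobSq M := by
  refine Finset.sum_le_sum fun i _ => Finset.sum_le_sum fun j _ => ?_
  rw [mul_diagonal, mul_pow]
  exact mul_le_of_le_one_right (sq_nonneg _) (hc j)

lemma trace_transpose_mul_diagonal_mul_eq_frobSq {p a : ℕ} (X : Matrix (Fin n) (Fin p) ℝ)
    (s : Fin p → ℝ) (W : Matrix (Fin p) (Fin a) ℝ) :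
    trace (Wᵀ * diagonal s * Xᵀ * X * diagonal s * W) = frobSq (X * diagonal s * W) := by
  simp only [frobSq_eq_trace, transpose_mul, diagonal_transpose, Matrix.mul_assoc]

end Frobenius

theorem Orthonormal.exists_orthonormal_extension_of_card_le {𝕜 E ι : Type*} [RCLike 𝕜]
    [NormedAddCommGroup E] [InnerProductSpace 𝕜 E] [FiniteDimensional 𝕜 E] [Fintype ι]
    (hcard : Fintype.card ι ≤ Module.finrank 𝕜 E) {v : ι → E} {s : Set ι}
    (hv : Orthonormal 𝕜 (s.domRestrict v)) :
    ∃ w : ι → E, Orthonormal 𝕜 w ∧ ∀ i ∈ s, w i = v i := by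
  classical
  let v' : ι ⊕ Fin (Module.finrank 𝕜 E - Fintype.card ι) → E := Sum.elim v 0
  have hv' : Orthonormal 𝕜 ((Sum.inl '' s).domRestrict v') := by
    rw [orthonormal_iff_ite]
    rintro ⟨_, i, hi, rfl⟩ ⟨_, j, hj, rfl⟩
    simpa [v', Subtype.ext_iff] using orthonormal_iff_ite.mp hv ⟨i, hi⟩ ⟨j, hj⟩
  obtain ⟨b, hb⟩ := hv'.exists_orthonormalBasis_extension_of_card_eq (by simp; omega)
  exact ⟨b ∘ Sum.inl, b.orthonormal.comp _ Sum.inl_injective,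
    fun i hi => hb _ (Set.mem_image_of_mem _ hi)⟩

section Factorization

variable {κ ι : Type*} [Fintype κ] [Fintype ι] [DecidableEq ι]

lemma exists_eq_mul_diagonal_of_transpose_mul_self_eq_diagonal {C : Matrix κ ι ℝ}
    {d : ι → ℝ} (hC : Cᵀ * C = diagonal d) (hcard : Fintype.card ι ≤ Fintype.card κ) :
    ∃ (U : Matrix κ ι ℝ) (c : ι → ℝ), Uᵀ * U = 1 ∧ C = U * diagonal c := by
  have hd : ∀ j, d j = ∑ r, C r j ^ 2 := fun j => by
    simpa [mul_apply, sq] using (congrFun (congrFun hC j) j).symm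
  have hd0 : ∀ j, 0 ≤ d j := fun j => (hd j).symm ▸ Finset.sum_nonneg fun r _ => sq_nonneg _
  let col : ι → EuclideanSpace ℝ κ := fun j => WithLp.toLp 2 (Cᵀ j)
  have hcol : ∀ i j, inner ℝ (col i) (col j) = diagonal d i j := fun i j => by
    rw [← hC]
    simp [col, EuclideanSpace.inner_toLp_toLp, mul_apply, dotProduct, mul_comm]
  let v : ι → EuclideanSpace ℝ κ := fun j => (√(d j))⁻¹ • col j
  have hv : Orthonormal ℝ ({j | d j ≠ 0}.domRestrict v) := by
    rw [orthonormal_iff_ite]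
    rintro ⟨i, hi⟩ ⟨j, hj⟩
    simp only [Set.domRestrict_apply, v, inner_smul_left, inner_smul_right, hcol, diagonal_apply,
      Subtype.ext_iff]
    split_ifs with hij
    · subst hij
      simp [← mul_assoc, ← mul_inv, Real.mul_self_sqrt (hd0 i), inv_mul_cancel₀ hi]
    · simp
  obtain ⟨w, hw, hwv⟩ := hv.exists_orthonormal_extension_of_card_le (by simpa using hcard)
  refine ⟨of fun r j => w j r, fun j => √(d j), ?_, ?_⟩
  · ext i j
    simpa [mul_apply, EuclideanSpace.inner_eq_star_dotProduct, dotProduct, one_apply, mul_comm]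
      using orthonormal_iff_ite.mp hw i j
  · ext r j
    rw [mul_diagonal, of_apply]
    by_cases hj : d j = 0
    · have hCj := (Finset.sum_eq_zero_iff_of_nonneg fun r _ => sq_nonneg (C r j)).mp
        ((hd j).symm.trans hj) r (Finset.mem_univ r)
      simpa [hj] using hCj
    · rw [hwv j hj]
      have hsqrt : √(d j) ≠ 0 := Real.sqrt_ne_zero'.mpr ((hd0 j).lt_of_ne' hj)
      simp only [v, col, PiLp.smul_apply, transpose_apply, smul_eq_mul]
      field_simp

lemma exists_orthogonal_transpose_mul_self_eq_diagonal (V : Matrix κ ι ℝ) :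
    ∃ Q : Matrix ι ι ℝ, Q * Qᵀ = 1 ∧ ∃ d, (V * Q)ᵀ * (V * Q) = diagonal d := by
  have hG : (Vᵀ * V).IsHermitian := by
    simpa using isHermitian_conjTranspose_mul_self V
  refine ⟨hG.eigenvectorUnitary, ?_, hG.eigenvalues, ?_⟩
  · simpa [star_eq_conjTranspose] using mem_unitaryGroup_iff.mp hG.eigenvectorUnitary.2
  · simpa [Unitary.conjStarAlgAut_star_apply, star_eq_conjTranspose, transpose_mul,
      Matrix.mul_assoc] using hG.conjStarAlgAut_star_eigenvectorUnitary

theorem exists_mul_eq_mul_diagonal_of_card_le (V : Matrix κ ι ℝ)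
    (hcard : Fintype.card ι ≤ Fintype.card κ) :
    ∃ (Q : Matrix ι ι ℝ) (U : Matrix κ ι ℝ) (c : ι → ℝ),
      Q * Qᵀ = 1 ∧ Uᵀ * U = 1 ∧ V * Q = U * diagonal c := by
  obtain ⟨Q, hQ, d, hd⟩ := exists_orthogonal_transpose_mul_self_eq_diagonal V
  obtain ⟨U, c, hU, hVQ⟩ := exists_eq_mul_diagonal_of_transpose_mul_self_eq_diagonal hd hcard
  exact ⟨Q, U, c, hQ, hU, hVQ⟩

end Factorization

lemma transpose_mul_diagonal_mul_apply_le {κ ι : Type*} [Fintype κ] [DecidableEq κ]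
    (Z : Matrix κ ι ℝ) {s : κ → ℝ} (hs : ∀ i, s i ≤ 1) (j : ι) :
    (Zᵀ * diagonal s * Z) j j ≤ (Zᵀ * Z) j j := by
  simp only [mul_apply, transpose_apply, diagonal_apply, mul_ite, mul_zero, Finset.sum_ite_eq',
    Finset.mem_univ, if_true]
  exact Finset.sum_le_sum fun i _ => by nlinarith [hs i, mul_self_nonneg (Z i j)]

lemma exists_stiefel_frobSq_le {n p a : ℕ} {κ : Type*} [Fintype κ]
    (X : Matrix (Fin n) (Fin p) ℝ) {s : Fin p → ℝ} (hs : ∀ i, s i ^ 2 ≤ 1)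
    {W : Matrix (Fin p) (Fin a) ℝ} (hW : Wᵀ * W = 1) {P : Matrix (Fin p) κ ℝ}
    (hP : P * Pᵀ * diagonal s = diagonal s) (hcard : a ≤ Fintype.card κ) :
    ∃ U : Matrix κ (Fin a) ℝ, Uᵀ * U = 1 ∧ frobSq (X * diagonal s * W) ≤ frobSq (X * P * U) := by
  obtain ⟨Q, U, c, hQ, hU, hVQ⟩ :=
    exists_mul_eq_mul_diagonal_of_card_le (Pᵀ * diagonal s * W) (by simpa using hcard)
  have hPs : ∀ M : Matrix (Fin p) (Fin a) ℝ, P * (Pᵀ * (diagonal s * M)) = diagonal s * M := by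
    intro M
    rw [← Matrix.mul_assoc, ← Matrix.mul_assoc, hP]
  have hc : ∀ j, c j ^ 2 ≤ 1 := by
    intro j
    have hZ : (W * Q)ᵀ * (W * Q) = 1 := by
      rw [transpose_mul, Matrix.mul_assoc, ← Matrix.mul_assoc Wᵀ, hW, Matrix.one_mul,
        mul_eq_one_comm.mp hQ]
    have hgram : (U * diagonal c)ᵀ * (U * diagonal c) =
        (W * Q)ᵀ * diagonal (fun i => s i ^ 2) * (W * Q) := by
      rw [← hVQ]
      simp only [transpose_mul, transpose_transpose, diagonal_transpose, Matrix.mul_assoc, hPs]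
      rw [← Matrix.mul_assoc (diagonal s), diagonal_mul_diagonal]
      simp only [sq]
    calc c j ^ 2 = ((U * diagonal c)ᵀ * (U * diagonal c)) j j := by
          rw [transpose_mul, diagonal_transpose, Matrix.mul_assoc, ← Matrix.mul_assoc Uᵀ, hU,
            Matrix.one_mul, diagonal_mul_diagonal, diagonal_apply_eq, sq]
      _ ≤ ((W * Q)ᵀ * (W * Q)) j j := hgram ▸ transpose_mul_diagonal_mul_apply_le _ hs j
      _ = 1 := by rw [hZ, one_apply_eq]
  refine ⟨U, hU, ?_⟩
  calc frobSq (X * diagonal s * W)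
      = frobSq (X * diagonal s * W * Q) := (frobSq_mul_of_mul_transpose_eq_one _ hQ).symm
    _ = frobSq (X * P * U * diagonal c) := by
        simp only [Matrix.mul_assoc] at hVQ ⊢
        rw [← hPs, hVQ]
    _ ≤ frobSq (X * P * U) := frobSq_mul_diagonal_le _ hc

section Selection

variable {κ : Type*} [DecidableEq κ] (S : Finset κ)

lemma transpose_mul_self_submatrix_one [Fintype κ] :
    ((1 : Matrix κ κ ℝ).submatrix id ((↑) : S → κ))ᵀ *
      (1 : Matrix κ κ ℝ).submatrix id ((↑) : S → κ) = 1 := by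
  rw [transpose_submatrix, transpose_one, ← submatrix_mul _ _ _ _ _ Function.bijective_id,
    Matrix.one_mul, submatrix_one _ Subtype.val_injective]

lemma submatrix_one_mul_transpose_self :
    (1 : Matrix κ κ ℝ).submatrix id ((↑) : S → κ) *
      ((1 : Matrix κ κ ℝ).submatrix id ((↑) : S → κ))ᵀ =
      diagonal fun i => if i ∈ S then 1 else 0 := by
  ext i i'
  simp only [mul_apply, transpose_apply, submatrix_apply, id, one_apply, diagonal_apply]
  rw [Finset.sum_coe_sort S fun j => (if i = j then (1 : ℝ) else 0) * if i' = j then 1 else 0]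
  simp only [boole_mul, Finset.sum_ite_eq, eq_comm (a := i')]
  split_ifs <;> simp_all

end Selection

lemma IsBinary.exists_support_subset_finset {p a k : ℕ} {s : Fin p → ℝ} (hs : IsBinary s)
    (hsk : ∑ i, s i ≤ (k : ℝ)) (hak : a ≤ k) (hkp : k ≤ p) :
    ∃ S : Finset (Fin p), a ≤ S.card ∧ S.card ≤ k ∧ ∀ i ∉ S, s i = 0 := by
  classical
  let S₀ := Finset.univ.filter fun i => s i = 1
  have hS₀ : S₀.card ≤ k := by
    have hsum : ∑ i, s i = S₀.card := by
      rw [Finset.card_filter, Nat.cast_sum]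
      exact Finset.sum_congr rfl fun i _ => by rcases hs i with h | h <;> simp [h]
    exact_mod_cast hsum ▸ hsk
  obtain ⟨S, hS₀S, -, hS⟩ := Finset.exists_subsuperset_card_eq (Finset.subset_univ S₀)
    (le_max_left S₀.card a) (by simpa using max_le (hS₀.trans hkp) (hak.trans hkp))
  refine ⟨S, hS ▸ le_max_right _ _, hS ▸ max_le hS₀ hak, fun i hi => ?_⟩
  exact (hs i).resolve_right fun h => hi (hS₀S (by simp [S₀, h]))

theorem exists_feasible_frobSq_le {n p a k : ℕ} (X : Matrix (Fin n) (Fin p) ℝ) (hak : a ≤ k)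
    (hkp : k ≤ p) {s : Fin p → ℝ} {W : Matrix (Fin p) (Fin a) ℝ} (hs : IsBinary s)
    (hsk : ∑ i, s i ≤ (k : ℝ)) (hW : Wᵀ * W = 1) :
    ∃ (s' : Fin p → ℝ) (W' : Matrix (Fin p) (Fin a) ℝ),
      IsBinary s' ∧ ∑ i, s' i ≤ (k : ℝ) ∧ W'ᵀ * diagonal s' * W' = 1 ∧ W'ᵀ * W' = 1 ∧
      frobSq (X * diagonal s * W) ≤ frobSq (X * diagonal s' * W') := by
  obtain ⟨S, haS, hSk, hsS⟩ := hs.exists_support_subset_finset hsk hak hkp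
  set P := (1 : Matrix (Fin p) (Fin p) ℝ).submatrix id ((↑) : S → Fin p)
  set s' : Fin p → ℝ := fun i => if i ∈ S then 1 else 0
  have hPP : P * Pᵀ = diagonal s' := submatrix_one_mul_transpose_self S
  have hs'P : diagonal s' * P = P := by
    rw [← hPP, Matrix.mul_assoc, transpose_mul_self_submatrix_one, Matrix.mul_one]
  have hPs : P * Pᵀ * diagonal s = diagonal s := by
    rw [hPP, diagonal_mul_diagonal]
    congr 1
    funext i
    by_cases hi : i ∈ S <;> simp [s', hi, hsS]
  obtain ⟨U, hU, hle⟩ := exists_stiefel_frobSq_le X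
    (fun i => by rcases hs i with h | h <;> simp [h]) hW hPs (by simpa using haS)
  have hW' : (P * U)ᵀ * (P * U) = 1 := by
    rw [transpose_mul, Matrix.mul_assoc, ← Matrix.mul_assoc Pᵀ, transpose_mul_self_submatrix_one,
      Matrix.one_mul, hU]
  have hs'W' : diagonal s' * (P * U) = P * U := by rw [← Matrix.mul_assoc, hs'P]
  refine ⟨s', P * U, fun i => by by_cases hi : i ∈ S <;> simp [s', hi], ?_, ?_, hW', ?_⟩
  · simpa [s', Finset.sum_boole] using hSk
  · rw [Matrix.mul_assoc, hs'W', hW']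
  · rwa [Matrix.mul_assoc X (diagonal s'), hs'W', ← Matrix.mul_assoc]

theorem stmt_4_general {n p : ℕ} (X : Matrix (Fin n) (Fin p) ℝ) (a k : ℕ)
    (hak : a ≤ k) (hkp : k ≤ p) :
    sSup {v : ℝ | ∃ (s : Fin p → ℝ) (W : Matrix (Fin p) (Fin a) ℝ),
        IsBinary s ∧ ∑ i, s i ≤ (k : ℝ) ∧
        Wᵀ * diagonal s * W = 1 ∧ Wᵀ * W = 1 ∧
        v = trace (Wᵀ * diagonal s * Xᵀ * X * diagonal s * W)} =
    sSup {v : ℝ | ∃ (s : Fin p → ℝ) (W : Matrix (Fin p) (Fin a) ℝ),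
        IsBinary s ∧ ∑ i, s i ≤ (k : ℝ) ∧ Wᵀ * W = 1 ∧
        v = trace (Wᵀ * diagonal s * Xᵀ * X * diagonal s * W)} := by
  apply csSup_eq_csSup_of_forall_exists_le
  · rintro v ⟨s, W, hs, hsk, -, hW, rfl⟩
    exact ⟨_, ⟨s, W, hs, hsk, hW, rfl⟩, le_rfl⟩
  · rintro v ⟨s, W, hs, hsk, hW, rfl⟩
    obtain ⟨s', W', hs', hsk', hW's', hW', hle⟩ := exists_feasible_frobSq_le X hak hkp hs hsk hW
    refine ⟨_, ⟨s', W', hs', hsk', hW's', hW', rfl⟩, ?_⟩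
    simpa only [trace_transpose_mul_diagonal_mul_eq_frobSq] using hle

/-- Proposition 2: in Problem (3) the constraint Wᵀ·diag(s)·W = I can be
dropped without changing the optimal value. -/
theorem stmt_4 {n p : ℕ} (X : Matrix (Fin n) (Fin p) ℝ) (a k : ℕ)
    (ha1 : 1 ≤ a) (hak : a ≤ k) (hkp : k ≤ p) :
    sSup {v : ℝ | ∃ (s : Fin p → ℝ) (W : Matrix (Fin p) (Fin a) ℝ),
        IsBinary s ∧ ∑ i, s i ≤ (k : ℝ) ∧
        Wᵀ * diagonal s * W = 1 ∧ Wᵀ * W = 1 ∧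
        v = trace (Wᵀ * diagonal s * Xᵀ * X * diagonal s * W)} =
    sSup {v : ℝ | ∃ (s : Fin p → ℝ) (W : Matrix (Fin p) (Fin a) ℝ),
        IsBinary s ∧ ∑ i, s i ≤ (k : ℝ) ∧ Wᵀ * W = 1 ∧
        v = trace (Wᵀ * diagonal s * Xᵀ * X * diagonal s * W)} :=
  stmt_4_general X a k hak hkp
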